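/- arXiv:2402.19234 — 2 statements merged into one kernel-verified Lean document; each statement's English description precedes it below -/
import Mathlib

section
/- Let n = qa with a ≥ 4 and q ≥ 3, or n = qa + r with q ≥ 2, 1 ≤ r ≤ a-1 and 4 ≤ a ≤ r + q + 1. Then for any two vertices v_i, v_j of the oriented circulant graph C⃗(n;1,a) with 0 ≤ i < j ≤ n-1, the directed distance from v_i to v_j equals ⌊(j-i)/a⌋·(1-a) + (j - i). -/
/-- Arc relation of the oriented circulant graph C⃗(n;1,a): arcs u → u+1 and u → u+a (mod n). -/
def circArc (n : ℕ) (a : ℤ) (u v : ZMod n) : Prop :=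
  v = u + 1 ∨ v = u + (a : ZMod n)

/-- There is a directed walk of length k from u to v in C⃗(n;1,a). -/
def circSteps (n : ℕ) (a : ℤ) (u v : ZMod n) (k : ℕ) : Prop :=
  ∃ g : ℕ → ZMod n, g 0 = u ∧ g k = v ∧ ∀ i < k, circArc n a (g i) (g (i + 1))

/-- Directed distance: length of a shortest directed path from u to v. -/
noncomputable def circDist (n : ℕ) (a : ℤ) (u v : ZMod n) : ℕ :=
  sInf {k | circSteps n a u v k}

/-- Eccentricity of a vertex: maximum distance from it to any vertex. -/
noncomputable def circEcc (n : ℕ) (a : ℤ) (u : ZMod n) : ℕ :=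
  sSup {d | ∃ v, d = circDist n a u v}

/-- Diameter: maximum eccentricity. -/
noncomputable def circDiam (n : ℕ) (a : ℤ) : ℕ :=
  sSup {d | ∃ u, d = circEcc n a u}

/-- f is an independent broadcast on C⃗(n;1,a). -/
def IsIndepBroadcast (n : ℕ) (a : ℤ) (f : ZMod n → ℕ) : Prop :=
  (∀ v, f v ≤ circEcc n a v) ∧
  ∀ u v : ZMod n, u ≠ v → 0 < f u → 0 < f v → f u < circDist n a u v

/-- Cost of a broadcast: sum of its values over all vertices. -/
def circCost (n : ℕ) (f : ZMod n → ℕ) : ℕ :=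
  ∑ i ∈ Finset.range n, f (i : ZMod n)

/-- The broadcast independence number of C⃗(n;1,a). -/
noncomputable def betaB (n : ℕ) (a : ℤ) : ℕ :=
  sSup {c | ∃ f : ZMod n → ℕ, IsIndepBroadcast n a f ∧ c = circCost n f}

/-!
A walk of length `k` from `u` that uses `t` arcs of length `a` ends at `u + k + t (a - 1)`, and
every pair `t ≤ k` is realized. So the distance from `u` to `u + d` is the least `t + s` with
`t a + s ≡ d (mod n)`, and for a fixed representative `e = t a + s` the greedy choice
`e / a + e % a` is optimal. Replacing `d` by `d + c n`, where `n = q a + r`, raises the number of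
long arcs by at most `c (q + 1)` (exactly `c q` if `r = 0`), each saving `a - 1` steps; when
`r = 0` or `a ≤ r + q + 1` this cannot make up for the extra offset `c n`, so the representative
`d` itself is best.
-/

def greedyLength (a e : ℕ) : ℕ := e / a + e % a

lemma greedyLength_add_div_mul_pred (a e : ℕ) : greedyLength a e + e / a * (a - 1) = e := by
  rcases a with _ | a
  · simp [greedyLength]
  · have := Nat.div_add_mod' e (a + 1)
    simp only [greedyLength, Nat.add_sub_cancel]
    linarith

lemma greedyLength_mul_add_le (a t s : ℕ) : greedyLength a (t * a + s) ≤ t + s := by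
  rcases Nat.eq_zero_or_pos a with rfl | ha
  · simp [greedyLength]
  have ht : t ≤ (t * a + s) / a := (Nat.le_div_iff_mul_le ha).2 (Nat.le_add_right _ _)
  have h := greedyLength_add_div_mul_pred a (t * a + s)
  obtain ⟨b, rfl⟩ : ∃ b, a = b + 1 := ⟨a - 1, by omega⟩
  simp only [Nat.add_sub_cancel] at h
  nlinarith

lemma greedyLength_le_add_mul {n a q r : ℕ} (hn : n = q * a + r) (hr : r < a)
    (hwrap : r = 0 ∨ a ≤ r + q + 1) (d c : ℕ) :
    greedyLength a d ≤ greedyLength a (d + c * n) := by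
  obtain ⟨b, rfl⟩ : ∃ b, a = b + 1 := ⟨a - 1, by omega⟩
  subst hn
  have hpos : 0 < b + 1 := b.add_one_pos
  have hd := greedyLength_add_div_mul_pred (b + 1) d
  have he := greedyLength_add_div_mul_pred (b + 1) (d + c * (q * (b + 1) + r))
  have hmod := Nat.mod_lt d hpos
  have hdiv : (d + c * (q * (b + 1) + r)) / (b + 1)
      = d / (b + 1) + c * q + (d % (b + 1) + c * r) / (b + 1) := by
    conv_lhs => rw [← Nat.div_add_mod d (b + 1)]
    rw [show (b + 1) * (d / (b + 1)) + d % (b + 1) + c * (q * (b + 1) + r)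
      = d % (b + 1) + c * r + (d / (b + 1) + c * q) * (b + 1) by ring,
      Nat.add_mul_div_right _ _ hpos]
    ring
  simp only [Nat.add_sub_cancel, hdiv] at hd he
  rcases hwrap with rfl | hwrap
  · simp only [mul_zero, add_zero, Nat.div_eq_of_lt hmod] at he ⊢
    nlinarith
  · have hcarry : (d % (b + 1) + c * r) / (b + 1) ≤ c := by
      rw [Nat.div_le_iff_le_mul_add_pred hpos, Nat.add_sub_cancel]
      nlinarith [Nat.mul_le_mul_left c (Nat.le_of_lt_succ hr)]
    nlinarith [Nat.mul_le_mul_right b hcarry, Nat.mul_le_mul_left c (show b ≤ r + q by omega)]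

lemma circSteps_iff {n : ℕ} {a : ℤ} {u v : ZMod n} {k : ℕ} :
    circSteps n a u v k ↔ ∃ t s : ℕ, t + s = k ∧ v = u + t * a + s := by
  constructor
  · rintro ⟨g, rfl, rfl, hg⟩
    suffices ∀ l ≤ k, ∃ t s : ℕ, t + s = l ∧ g l = g 0 + t * a + s from this k le_rfl
    intro l hl
    induction l with
    | zero => exact ⟨0, 0, rfl, by simp⟩
    | succ l ih =>
      obtain ⟨t, s, rfl, hts⟩ := ih (by omega)
      rcases hg (t + s) hl with h | h
      · exact ⟨t, s + 1, by ring, by rw [h, hts]; push_cast; ring⟩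
      · exact ⟨t + 1, s, by ring, by rw [h, hts]; push_cast; ring⟩
  · rintro ⟨t, s, rfl, rfl⟩
    refine ⟨fun l => u + (min l t : ℕ) * a + (l - min l t : ℕ), by simp, by simp, ?_⟩
    intro l hl
    by_cases hlt : l < t
    · right
      simp only [min_eq_left hlt.le, min_eq_left (Nat.succ_le_of_lt hlt), Nat.sub_self]
      push_cast; ring
    · left
      simp only [min_eq_right (not_lt.1 hlt), min_eq_right (by omega : t ≤ l + 1)]
      rw [Nat.sub_add_comm (not_lt.1 hlt)]
      push_cast; ring

theorem circDist_add_natCast {n a q r : ℕ} (hn : n = q * a + r) (hr : r < a)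
    (hwrap : r = 0 ∨ a ≤ r + q + 1) (u : ZMod n) {d : ℕ} (hd : d < n) :
    circDist n a u (u + d) = greedyLength a d := by
  have hgreedy : circSteps n a u (u + d) (greedyLength a d) := by
    refine circSteps_iff.2 ⟨d / a, d % a, rfl, ?_⟩
    conv_lhs => rw [← Nat.div_add_mod' d a]
    push_cast; ring
  refine le_antisymm (Nat.sInf_le hgreedy) (le_csInf ⟨_, hgreedy⟩ ?_)
  intro k hk
  obtain ⟨t, s, rfl, hts⟩ := circSteps_iff.1 hk
  have hmod : d ≡ t * a + s [MOD n] := by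
    rw [← ZMod.natCast_eq_natCast_iff]
    push_cast
    simpa [add_assoc] using hts
  calc greedyLength a d ≤ greedyLength a (d + (t * a + s) / n * n) :=
        greedyLength_le_add_mul hn hr hwrap d _
    _ = greedyLength a (t * a + s) := by
        rw [← Nat.mod_eq_of_lt hd, hmod, Nat.mod_add_div']
    _ ≤ t + s := greedyLength_mul_add_le a t s

theorem stmt9 (n a q r : ℕ)
    (h : (n = q * a ∧ 4 ≤ a ∧ 3 ≤ q) ∨
         (n = q * a + r ∧ 2 ≤ q ∧ 1 ≤ r ∧ r ≤ a - 1 ∧ 4 ≤ a ∧ a ≤ r + q + 1))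
    (i j : ℕ) (hij : i < j) (hj : j ≤ n - 1) :
    (circDist n (a : ℤ) (i : ZMod n) (j : ZMod n) : ℤ) =
      ((j - i) / a : ℕ) * (1 - (a : ℤ)) + ((j : ℤ) - (i : ℤ)) := by
  have ha : 1 ≤ a := by omega
  have hdist : ∀ d < n, circDist n a (i : ZMod n) (i + d) = greedyLength a d := by
    rcases h with ⟨hn, -, -⟩ | ⟨hn, -, -, hra, -, hwrap⟩
    · exact fun d hd => circDist_add_natCast (r := 0) (by rw [hn, add_zero]) ha (Or.inl rfl) _ hd
    · exact fun d hd => circDist_add_natCast hn (by omega) (Or.inr hwrap) _ hd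
  have hji : (j : ZMod n) = i + (j - i : ℕ) := by rw [← Nat.cast_add, Nat.add_sub_cancel' hij.le]
  have hlen := greedyLength_add_div_mul_pred a (j - i)
  rw [hji, hdist _ (by omega)]
  generalize (j - i) / a = m at hlen ⊢
  zify [ha, hij.le] at hlen
  linarith
end

section
/- If n = k(a-1) with a ≥ 4 and k ≥ 3, then the broadcast independence number of the oriented circulant graph C⃗(n;1,a) equals (a-2)k. -/
/-!
Since `a ≡ 1 (mod a - 1)`, every arc raises the residue modulo `a - 1` by one, so distinct
vertices whose labels agree modulo `a - 1` are at distance at least `a - 1`. Broadcasting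
`a - 2` from every `(a - 1)`-th vertex is therefore independent, of cost `(a - 2) k`.

Conversely, for a broadcast `f` let `g v` be the forward gap from a broadcasting vertex `v` to
the next one; the gaps sum to `n`. The greedy walk gives `f v < d(v, v + g v) ≤ g v / a + g v % a`
(for a lone broadcasting vertex, the eccentricity bound `(n - 1) / a + a - 1` instead), which
forces `(a - 1) f v + g v ≤ (a - 1) g v`. Summing, `(a - 1) cost + n ≤ (a - 1) n`, that is
`cost ≤ n - k = (a - 2) k`.
-/

open Finset

section walks
variable {n : ℕ} {a : ℤ}

lemma circSteps_refl (u : ZMod n) : circSteps n a u u 0 :=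
  ⟨fun _ => u, rfl, rfl, fun _ hi => absurd hi (Nat.not_lt_zero _)⟩

lemma circSteps.eq_of_zero {u v : ZMod n} (h : circSteps n a u v 0) : u = v := by
  obtain ⟨g, rfl, rfl, -⟩ := h
  rfl

lemma circSteps.snoc {u v w : ZMod n} {j : ℕ} (h : circSteps n a u v j)
    (hvw : circArc n a v w) : circSteps n a u w (j + 1) := by
  obtain ⟨g, rfl, rfl, hg⟩ := h
  refine ⟨Function.update g (j + 1) w, by simp, by simp, fun i hi => ?_⟩
  rcases Nat.lt_succ_iff_lt_or_eq.mp hi with hij | rfl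
  · simpa [Function.update_of_ne (show i ≠ j + 1 by omega),
      Function.update_of_ne (show i + 1 ≠ j + 1 by omega)] using hg i hij
  · simpa [Function.update_of_ne (show i ≠ i + 1 by omega)] using hvw

lemma circSteps_add_mul (u : ZMod n) (s t : ℕ) :
    circSteps n a u (u + s + t * a) (s + t) := by
  induction t with
  | zero =>
    induction s with
    | zero => simpa using circSteps_refl u
    | succ s ih => simpa [add_assoc] using ih.snoc (Or.inl rfl)
  | succ t ih =>
    convert ih.snoc (Or.inr rfl) using 1
    · push_cast; ring
    · ring

/-- Both arcs raise the residue modulo `m` by one when `a ≡ 1 (mod m)`. -/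
lemma circSteps.castHom_sub {m : ℕ} (hmn : m ∣ n) (ha : (a : ZMod m) = 1) {u v : ZMod n}
    {j : ℕ} (h : circSteps n a u v j) : ZMod.castHom hmn (ZMod m) (v - u) = j := by
  obtain ⟨g, rfl, rfl, hg⟩ := h
  suffices ∀ i ≤ j, ZMod.castHom hmn (ZMod m) (g i - g 0) = i from this j le_rfl
  intro i hi
  induction i with
  | zero => simp
  | succ i ih =>
    have hstep : ZMod.castHom hmn (ZMod m) (g (i + 1) - g i) = 1 := by
      rcases hg i (by omega) with h | h <;> rw [h, add_sub_cancel_left]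
      · exact map_one _
      · rw [map_intCast, ha]
    rw [← sub_add_sub_cancel, map_add, hstep, ih (by omega)]
    push_cast
    ring

variable [NeZero n]

lemma circSteps_val_sub (u v : ZMod n) : circSteps n a u v (v - u).val := by
  simpa using circSteps_add_mul (a := a) u (v - u).val 0

lemma circSteps_circDist (u v : ZMod n) : circSteps n a u v (circDist n a u v) :=
  Nat.sInf_mem (s := {j | circSteps n a u v j}) ⟨_, circSteps_val_sub u v⟩

lemma le_circDist_of_castHom_sub_eq_zero {m : ℕ} (hmn : m ∣ n) (ha : (a : ZMod m) = 1)
    {u v : ZMod n} (huv : u ≠ v) (h : ZMod.castHom hmn (ZMod m) (v - u) = 0) :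
    m ≤ circDist n a u v := by
  have hd := circSteps_circDist (a := a) u v
  have hpos : 0 < circDist n a u v :=
    Nat.pos_of_ne_zero fun h0 => huv (h0 ▸ hd).eq_of_zero
  rw [hd.castHom_sub hmn ha, ZMod.natCast_eq_zero_iff] at h
  exact Nat.le_of_dvd hpos h

lemma circDist_le_circEcc (u v : ZMod n) : circDist n a u v ≤ circEcc n a u := by
  refine le_csSup ((Set.finite_range fun w => circDist n a u w).subset ?_).bddAbove ⟨v, rfl⟩
  rintro _ ⟨w, rfl⟩
  exact ⟨w, rfl⟩

end walks

section natural
variable {n : ℕ} [NeZero n] {a : ℕ}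

/-- The greedy walk: `x / a` arcs of length `a`, then `x % a` arcs of length one. -/
lemma circDist_le_div_add_mod (u v : ZMod n) :
    circDist n a u v ≤ (v - u).val / a + (v - u).val % a := by
  refine Nat.sInf_le ?_
  have h := circSteps_add_mul (n := n) (a := a) u ((v - u).val % a) ((v - u).val / a)
  have hv : u + (((v - u).val % a : ℕ) : ZMod n) + (((v - u).val / a : ℕ) : ZMod n)
      * ((a : ℤ) : ZMod n) = v := by
    rw [Int.cast_natCast, add_assoc, ← Nat.cast_mul, ← Nat.cast_add, Nat.mod_add_div',
      ZMod.natCast_zmod_val, add_sub_cancel]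
  rwa [hv, add_comm] at h

lemma circEcc_le (ha : 0 < a) (u : ZMod n) : circEcc n a u ≤ (n - 1) / a + (a - 1) := by
  refine csSup_le ⟨_, u, rfl⟩ ?_
  rintro _ ⟨v, rfl⟩
  have hlt := ZMod.val_lt (v - u)
  have hmod := Nat.mod_lt (v - u).val ha
  have hdiv : (v - u).val / a ≤ (n - 1) / a := Nat.div_le_div_right (by omega)
  have := circDist_le_div_add_mod (a := a) u v
  omega

end natural

section gaps
variable {n : ℕ} [NeZero n] {p : ZMod n → Prop}

lemma exists_add_succ_of_exists (h : ∃ x, p x) (v : ZMod n) :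
    ∃ j : ℕ, p (v + (j + 1 : ℕ)) := by
  obtain ⟨x, hx⟩ := h
  refine ⟨(x - v - 1).val, ?_⟩
  rwa [Nat.cast_succ, ZMod.natCast_zmod_val, sub_add_cancel, add_sub_cancel]

variable [DecidablePred p]

/-- Forward distance from `v` to the next point of `p` (equal to `n` if `v` is the only one). -/
noncomputable def gapAfter (h : ∃ x, p x) (v : ZMod n) : ℕ :=
  Nat.find (exists_add_succ_of_exists h v) + 1

variable (h : ∃ x, p x)

lemma gapAfter_pos (v : ZMod n) : 0 < gapAfter h v := Nat.succ_pos _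

lemma gapAfter_spec (v : ZMod n) : p (v + gapAfter h v) :=
  Nat.find_spec (exists_add_succ_of_exists h v)

lemma gapAfter_le {v : ZMod n} (hv : p v) : gapAfter h v ≤ n := by
  have hn := NeZero.pos n
  have : Nat.find (exists_add_succ_of_exists h v) ≤ n - 1 :=
    Nat.find_min' _ (by rwa [Nat.sub_add_cancel hn, ZMod.natCast_self, add_zero])
  unfold gapAfter
  omega

lemma gapAfter_sub_one (v : ZMod n) :
    gapAfter h (v - 1) = if p v then 1 else gapAfter h v + 1 := by
  unfold gapAfter
  split_ifs with hv
  · simpa using hv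
  · have hiff (j : ℕ) : p (v - 1 + (j + 1 + 1 : ℕ)) ↔ p (v + (j + 1 : ℕ)) := by
      rw [show v - 1 + ((j + 1 + 1 : ℕ) : ZMod n) = v + ((j + 1 : ℕ) : ZMod n) by push_cast; ring]
    rw [Nat.find_comp_succ _ ((exists_add_succ_of_exists h v).imp fun j => (hiff j).2)
      (by simpa using hv), Nat.find_congr' fun {j} => hiff j]

lemma sum_gapAfter : ∑ v ∈ univ.filter p, gapAfter h v = n := by
  have hpoint (v : ZMod n) :
      gapAfter h (v - 1) + (if p v then gapAfter h v else 0) = gapAfter h v + 1 := by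
    rw [gapAfter_sub_one]
    split_ifs <;> ring
  have hshift : ∑ v, gapAfter h (v - 1) = ∑ v, gapAfter h v :=
    (Equiv.subRight 1).sum_comp (gapAfter h)
  have hsum := sum_congr rfl fun v (_ : v ∈ univ) => hpoint v
  rw [sum_add_distrib, sum_add_distrib, hshift, sum_const, card_univ, ZMod.card, smul_eq_mul,
    mul_one] at hsum
  rw [sum_filter]
  omega

end gaps

lemma mul_add_le_mul_of_lt_div_add_mod {a f g : ℕ} (ha : 3 ≤ a) (h : f < g / a + g % a) :
    (a - 1) * f + g ≤ (a - 1) * g := by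
  obtain ⟨b, rfl⟩ : ∃ b, a = b + 1 := ⟨a - 1, by omega⟩
  rw [Nat.add_sub_cancel]
  have hg := Nat.div_add_mod g (b + 1)
  have hr := Nat.mod_lt g (show 0 < b + 1 by omega)
  generalize g / (b + 1) = q at *
  generalize g % (b + 1) = r at *
  subst hg
  have h1 : b * (f + 1) ≤ b * (q + r) := Nat.mul_le_mul_left _ h
  have h2 : (b + 1) * q ≤ b * b * q := Nat.mul_le_mul_right q (by nlinarith)
  nlinarith

lemma circCost_eq_sum_univ {n : ℕ} [NeZero n] (f : ZMod n → ℕ) : circCost n f = ∑ v, f v := by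
  refine sum_nbij' (fun i => (i : ZMod n)) ZMod.val (by simp) (by simp [ZMod.val_lt])
    (fun i hi => ZMod.val_cast_of_lt (mem_range.mp hi)) (by simp) (by simp)

section broadcast
variable {n a k : ℕ}

lemma intCast_zmod_sub_one_eq_one (ha : 1 ≤ a) : ((a : ℤ) : ZMod (a - 1)) = 1 := by
  obtain ⟨b, rfl⟩ : ∃ b, a = b + 1 := ⟨a - 1, by omega⟩
  simp

lemma neZero_of_eq_mul (hn : n = k * (a - 1)) (ha : 2 ≤ a) (hk : 1 ≤ k) : NeZero n :=
  ⟨by subst hn; exact Nat.mul_ne_zero (by omega) (by omega)⟩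

lemma IsIndepBroadcast.mul_add_gapAfter_le (hn : n = k * (a - 1)) (ha : 4 ≤ a) (hk : 2 ≤ k)
    {f : ZMod n → ℕ} (hf : IsIndepBroadcast n a f) [NeZero n] (h : ∃ x, 0 < f x) {v : ZMod n}
    (hv : 0 < f v) : (a - 1) * f v + gapAfter h v ≤ (a - 1) * gapAfter h v := by
  rcases (gapAfter_le h hv).lt_or_eq with hlt | heq
  · have hne : v ≠ v + gapAfter h v := by
      intro he
      have hdvd := (ZMod.natCast_eq_zero_iff _ n).mp (left_eq_add.mp he)
      exact absurd (Nat.le_of_dvd (gapAfter_pos h v) hdvd) (by omega)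
    have hval : (v + gapAfter h v - v).val = gapAfter h v := by
      rw [add_sub_cancel_left, ZMod.val_cast_of_lt hlt]
    have hdist := circDist_le_div_add_mod (a := a) v (v + gapAfter h v)
    rw [hval] at hdist
    exact mul_add_le_mul_of_lt_div_add_mod (by omega)
      ((hf.2 v _ hne hv (gapAfter_spec h v)).trans_le hdist)
  · -- `v` is the only broadcasting vertex: bound `f v` by the eccentricity
    rw [heq]
    have hecc := (hf.1 v).trans (circEcc_le (by omega) v)
    have hka : n + k = k * a := by
      rw [hn, Nat.mul_sub_one, Nat.sub_add_cancel (Nat.le_mul_of_pos_right k (by omega))]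
    have hdiv : (n - 1) / a < k := Nat.div_lt_of_lt_mul (by rw [mul_comm]; omega)
    have hfk : f v + k ≤ n := by
      have : 3 * k + a ≤ k * a + 2 := by nlinarith
      omega
    calc (a - 1) * f v + n = (a - 1) * (f v + k) := by rw [mul_add, hn, mul_comm k]
      _ ≤ (a - 1) * n := Nat.mul_le_mul_left _ hfk

lemma IsIndepBroadcast.circCost_le (hn : n = k * (a - 1)) (ha : 4 ≤ a) (hk : 2 ≤ k)
    {f : ZMod n → ℕ} (hf : IsIndepBroadcast n a f) : circCost n f ≤ (a - 2) * k := by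
  have := neZero_of_eq_mul hn (by omega) (by omega)
  rw [circCost_eq_sum_univ]
  by_cases h : ∃ x, 0 < f x
  · have hsum := sum_le_sum (s := univ.filter fun x => 0 < f x) fun v hv =>
      hf.mul_add_gapAfter_le hn ha hk h (mem_filter.mp hv).2
    rw [sum_add_distrib, ← mul_sum, ← mul_sum, sum_gapAfter,
      sum_filter_of_ne fun _ _ => Nat.pos_of_ne_zero] at hsum
    have hSk : ∑ v, f v + k ≤ n :=
      Nat.le_of_mul_le_mul_left (by rwa [mul_add, mul_comm (a - 1) k, ← hn]) (by omega : 0 < a - 1)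
    have hnk : n = (a - 2) * k + k := by
      rw [hn, mul_comm, ← Nat.succ_mul]
      congr 1
      omega
    omega
  · simp only [not_exists, not_lt, nonpos_iff_eq_zero] at h
    simp [h]

def periodicBroadcast (n m c : ℕ) (v : ZMod n) : ℕ :=
  if m ∣ v.val + 1 then c else 0

lemma circCost_periodicBroadcast (n m c : ℕ) :
    circCost n (periodicBroadcast n m c) = n / m * c := by
  unfold circCost periodicBroadcast
  rw [sum_congr rfl fun i hi => by rw [ZMod.val_cast_of_lt (mem_range.mp hi)], ← sum_filter,
    sum_const, smul_eq_mul, Nat.card_multiples]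

lemma castHom_eq_neg_one_of_dvd_val_add_one [NeZero n] {m : ℕ} (hmn : m ∣ n) {v : ZMod n}
    (hv : m ∣ v.val + 1) : ZMod.castHom hmn (ZMod m) v = -1 := by
  rw [← ZMod.natCast_zmod_val v, map_natCast, eq_neg_iff_add_eq_zero]
  exact_mod_cast (ZMod.natCast_eq_zero_iff _ _).mpr hv

lemma isIndepBroadcast_periodicBroadcast (hn : n = k * (a - 1)) (ha : 2 ≤ a) (hk : 2 ≤ k) :
    IsIndepBroadcast n a (periodicBroadcast n (a - 1) (a - 2)) := by
  have := neZero_of_eq_mul hn ha (by omega)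
  have hdvd : a - 1 ∣ n := hn ▸ dvd_mul_left _ _
  have ha1 := intCast_zmod_sub_one_eq_one (a := a) (by omega)
  refine ⟨fun v => ?_, fun u v huv hu hv => ?_⟩
  · unfold periodicBroadcast
    split_ifs
    · have hne : v ≠ v + (a - 1 : ℕ) := by
        intro he
        have hdvd' := (ZMod.natCast_eq_zero_iff _ n).mp (left_eq_add.mp he)
        have : 2 * (a - 1) ≤ n := hn ▸ Nat.mul_le_mul_right _ hk
        have := Nat.le_of_dvd (by omega) hdvd'
        omega
      calc a - 2 ≤ a - 1 := by omega
        _ ≤ circDist n a v (v + (a - 1 : ℕ)) :=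
          le_circDist_of_castHom_sub_eq_zero hdvd ha1 hne (by simp)
        _ ≤ circEcc n a v := circDist_le_circEcc _ _
    · exact Nat.zero_le _
  · have hdvd_of_pos {w : ZMod n} (hw : 0 < periodicBroadcast n (a - 1) (a - 2) w) :
        a - 1 ∣ w.val + 1 := by
      by_contra hnd
      simp [periodicBroadcast, hnd] at hw
    have hdist := le_circDist_of_castHom_sub_eq_zero hdvd ha1 huv (by
      rw [map_sub, castHom_eq_neg_one_of_dvd_val_add_one hdvd (hdvd_of_pos hu),
        castHom_eq_neg_one_of_dvd_val_add_one hdvd (hdvd_of_pos hv), sub_self])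
    rw [periodicBroadcast, if_pos (hdvd_of_pos hu)]
    omega

end broadcast

theorem stmt17 (n a k : ℕ) (hn : n = k * (a - 1)) (ha : 4 ≤ a) (hk : 3 ≤ k) :
    betaB n (a : ℤ) = (a - 2) * k := by
  refine IsGreatest.csSup_eq
    ⟨⟨_, isIndepBroadcast_periodicBroadcast hn (by omega) (by omega), ?_⟩, ?_⟩
  · rw [circCost_periodicBroadcast, hn, Nat.mul_div_cancel _ (by omega), mul_comm]
  · rintro _ ⟨f, hf, rfl⟩
    exact hf.circCost_le hn ha (by omega)
end
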